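/- arXiv:2406.00260 — 2 statements merged into one kernel-verified Lean document; each statement's English description precedes it below -/
import Mathlib

section
/- Let N, n ≥ 1, for each k ∈ {1,…,N} let A_k ∈ ℝ^{m_k×n}, y_k ∈ ℝ^{m_k}, x_k ∈ ℝ^n, and set g_k := A_kᵀ(A_k x_k − y_k) ∈ ℝ^n. Define G : ℝ^n → ℝ by G(p) = (1/N) Σ_{k=1}^N (1/2)‖A_k(x_k − p ⊙ g_k) − y_k‖₂², where ⊙ is the Hadamard (entrywise) product. If the matrix M := (1/N) Σ_{k=1}^N (g_k g_kᵀ) ⊙ (A_kᵀA_k) is invertible, then p* := M⁻¹ ((1/N) Σ_{k=1}^N g_k ⊙ g_k) is a global minimizer of G. -/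
/-!
Writing `D_k := A_k · diag(g_k)` and `c_k := A_k x_k − y_k`, the residual of the `k`-th problem is
`c_k − D_k p`, so `G` is an ordinary (averaged) linear least-squares objective in `p`. Its Gram
matrix `D_kᵀ D_k = diag(g_k) A_kᵀ A_k diag(g_k)` is `(g_k g_kᵀ) ⊙ (A_kᵀ A_k)` and
`D_kᵀ c_k = g_k ⊙ g_k`, so the normal equations of `G` read `M p = (1/N) ∑ g_k ⊙ g_k`, and `p*`
solves them. Any solution of the normal equations minimizes a least-squares objective: the cross
term in the expansion of `‖c − D p‖²` around it vanishes, leaving a sum of squares.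
-/

open Matrix

section LeastSquares

variable {n : Type*} [Fintype n]

theorem residual_dotProduct_self_eq {ι : Type*} [Fintype ι] (D : Matrix ι n ℝ) (c : ι → ℝ)
    (p₀ p : n → ℝ) :
    (c - D *ᵥ p) ⬝ᵥ (c - D *ᵥ p) =
      (c - D *ᵥ p₀) ⬝ᵥ (c - D *ᵥ p₀) - 2 * ((p - p₀) ⬝ᵥ Dᵀ *ᵥ (c - D *ᵥ p₀))
        + D *ᵥ (p - p₀) ⬝ᵥ D *ᵥ (p - p₀) := by
  have hsplit : c - D *ᵥ p = (c - D *ᵥ p₀) - D *ᵥ (p - p₀) := by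
    rw [mulVec_sub]; abel
  rw [hsplit, dotProduct_transpose_mulVec]
  generalize c - D *ᵥ p₀ = r
  generalize D *ᵥ (p - p₀) = v
  rw [sub_dotProduct, dotProduct_sub, dotProduct_sub, dotProduct_comm v r]
  ring

theorem weighted_least_squares_le_of_normal_eq {K : Type*} [Fintype K]
    {ι : K → Type*} [∀ k, Fintype (ι k)] (w : K → ℝ) (hw : ∀ k, 0 ≤ w k)
    (D : ∀ k, Matrix (ι k) n ℝ) (c : ∀ k, ι k → ℝ) {p₀ : n → ℝ}
    (hp₀ : ∑ k, w k • (D k)ᵀ *ᵥ (c k - D k *ᵥ p₀) = 0) (p : n → ℝ) :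
    ∑ k, w k * ((c k - D k *ᵥ p₀) ⬝ᵥ (c k - D k *ᵥ p₀)) ≤
      ∑ k, w k * ((c k - D k *ᵥ p) ⬝ᵥ (c k - D k *ᵥ p)) := by
  have hcross : ∑ k, w k * ((p - p₀) ⬝ᵥ (D k)ᵀ *ᵥ (c k - D k *ᵥ p₀)) = 0 := by
    rw [← dotProduct_zero (p - p₀), ← hp₀, dotProduct_sum]
    simp only [dotProduct_smul, smul_eq_mul]
  have hsq : 0 ≤ ∑ k, w k * (D k *ᵥ (p - p₀) ⬝ᵥ D k *ᵥ (p - p₀)) :=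
    Finset.sum_nonneg fun k _ => mul_nonneg (hw k) (Fintype.sum_nonneg fun _ => mul_self_nonneg _)
  simp only [residual_dotProduct_self_eq (D _) (c _) p₀ p, mul_add, mul_sub,
    Finset.sum_add_distrib, Finset.sum_sub_distrib, mul_left_comm (w _) 2, ← Finset.mul_sum,
    hcross]
  linarith

end LeastSquares

section DiagonalScaling

variable {R m n : Type*} [CommRing R] [Fintype n] [DecidableEq n]

theorem diagonal_mul_mul_diagonal (v w : n → R) (B : Matrix n n R) :
    diagonal v * B * diagonal w = vecMulVec v w ⊙ B := by
  ext i j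
  simp only [mul_diagonal, diagonal_mul, hadamard_apply, vecMulVec_apply]
  ring

theorem mul_diagonal_mulVec (A : Matrix m n R) (g p : n → R) :
    (A * diagonal g) *ᵥ p = A *ᵥ fun j => p j * g j := by
  rw [← mulVec_mulVec]
  congr 1
  ext j
  rw [mulVec_diagonal, mul_comm]

theorem transpose_mul_diagonal_mul_self [Fintype m] (A : Matrix m n R) (g : n → R) :
    (A * diagonal g)ᵀ * (A * diagonal g) = vecMulVec g g ⊙ (Aᵀ * A) := by
  rw [transpose_mul, diagonal_transpose, ← Matrix.mul_assoc, Matrix.mul_assoc _ Aᵀ,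
    diagonal_mul_mul_diagonal]

theorem transpose_mul_diagonal_mulVec_sub [Fintype m] {A : Matrix m n R} {g : n → R} {r : m → R}
    (hg : g = Aᵀ *ᵥ r) (p : n → R) :
    (A * diagonal g)ᵀ *ᵥ (r - (A * diagonal g) *ᵥ p) =
      (fun i => g i * g i) - (vecMulVec g g ⊙ (Aᵀ * A)) *ᵥ p := by
  rw [mulVec_sub, mulVec_mulVec, transpose_mul_diagonal_mul_self, transpose_mul,
    diagonal_transpose, ← mulVec_mulVec, ← hg]
  congr 1
  ext i
  rw [mulVec_diagonal]

end DiagonalScaling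

theorem stmt_5_general {N n : ℕ}
    (m : Fin N → ℕ)
    (A : ∀ k, Matrix (Fin (m k)) (Fin n) ℝ)
    (y : ∀ k, Fin (m k) → ℝ)
    (x : Fin N → Fin n → ℝ)
    (gv : Fin N → Fin n → ℝ)
    (hgv : ∀ k, gv k = (A k)ᵀ.mulVec ((A k).mulVec (x k) - y k))
    (G : (Fin n → ℝ) → ℝ)
    (hG : ∀ p, G p = (1 / (N : ℝ)) * ∑ k,
        (1 / 2) * ∑ i, ((A k).mulVec (x k - fun j => p j * gv k j) - y k) i ^ 2)
    (M : Matrix (Fin n) (Fin n) ℝ)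
    (hM : M = (1 / (N : ℝ)) •
        ∑ k, Matrix.hadamard (Matrix.vecMulVec (gv k) (gv k)) ((A k)ᵀ * A k))
    (hMinv : IsUnit M.det)
    (pstar : Fin n → ℝ)
    (hpstar : pstar = M⁻¹.mulVec ((1 / (N : ℝ)) • ∑ k, fun i => gv k i * gv k i)) :
    ∀ p, G pstar ≤ G p := by
  set D := fun k => A k * diagonal (gv k)
  set c := fun k => A k *ᵥ x k - y k
  have hG_residual : ∀ p, G p = ∑ k, (1 / (2 * N)) * ((c k - D k *ᵥ p) ⬝ᵥ (c k - D k *ᵥ p)) := by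
    intro p
    simp only [hG, Finset.mul_sum, c, D, mul_diagonal_mulVec, mulVec_sub, dotProduct, sq]
    refine Finset.sum_congr rfl fun k _ => Finset.sum_congr rfl fun i _ => ?_
    simp only [Pi.sub_apply]
    ring
  have hnormal : M *ᵥ pstar = (1 / (N : ℝ)) • ∑ k, fun i => gv k i * gv k i := by
    rw [hpstar, mulVec_mulVec, mul_nonsing_inv M hMinv, one_mulVec]
  have hstationary : ∑ k, (1 / (2 * N) : ℝ) • (D k)ᵀ *ᵥ (c k - D k *ᵥ pstar) = 0 := by
    simp only [D, c, transpose_mul_diagonal_mulVec_sub (hgv _)]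
    rw [hM, smul_mulVec, sum_mulVec] at hnormal
    calc _ = (1 / 2 : ℝ) • ((1 / (N : ℝ)) • (∑ k, fun i => gv k i * gv k i) -
          (1 / (N : ℝ)) • ∑ k, (vecMulVec (gv k) (gv k) ⊙ ((A k)ᵀ * A k)) *ᵥ pstar) := by
          simp only [smul_sub, Finset.smul_sum, smul_smul, ← Finset.sum_sub_distrib]
          ring_nf
      _ = 0 := by rw [hnormal, sub_self, smul_zero]
  intro p
  rw [hG_residual, hG_residual]
  exact weighted_least_squares_le_of_normal_eq _ (fun _ => by positivity) D c
    hstationary p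

/-- Closed-form optimal diagonal preconditioner for averaged least-squares
objectives: if `M = (1/N) ∑ (g_k g_kᵀ) ⊙ (A_kᵀA_k)` is invertible, then
`p* = M⁻¹ ((1/N) ∑ g_k ⊙ g_k)` globally minimizes
`G(p) = (1/N) ∑ (1/2)‖A_k(x_k − p ⊙ g_k) − y_k‖₂²`. -/
theorem stmt_5 {N n : ℕ} (hN : 1 ≤ N) (hn : 1 ≤ n)
    (m : Fin N → ℕ)
    (A : ∀ k, Matrix (Fin (m k)) (Fin n) ℝ)
    (y : ∀ k, Fin (m k) → ℝ)
    (x : Fin N → Fin n → ℝ)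
    (gv : Fin N → Fin n → ℝ)
    (hgv : ∀ k, gv k = (A k)ᵀ.mulVec ((A k).mulVec (x k) - y k))
    (G : (Fin n → ℝ) → ℝ)
    (hG : ∀ p, G p = (1 / (N : ℝ)) * ∑ k,
        (1 / 2) * ∑ i, ((A k).mulVec (x k - fun j => p j * gv k j) - y k) i ^ 2)
    (M : Matrix (Fin n) (Fin n) ℝ)
    (hM : M = (1 / (N : ℝ)) •
        ∑ k, Matrix.hadamard (Matrix.vecMulVec (gv k) (gv k)) ((A k)ᵀ * A k))
    (hMinv : IsUnit M.det)
    (pstar : Fin n → ℝ)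
    (hpstar : pstar = M⁻¹.mulVec ((1 / (N : ℝ)) • ∑ k, fun i => gv k i * gv k i)) :
    ∀ p, G pstar ≤ G p :=
  stmt_5_general m A y x gv hgv G hG M hM hMinv pstar hpstar
end

section
/- Let f_1,…,f_N : ℝ^n → ℝ be differentiable, bounded below, with ∇f_k Lipschitz continuous with constant L_k > 0, and set L = max{L_1,…,L_N}. Suppose the sequences (x_k^t)_{t≥0} ⊂ ℝ^n for k ∈ {1,…,N} satisfy, for every t ≥ 0, the domination condition (1/N) Σ_{k=1}^N f_k(x_k^{t+1}) ≤ (1/N) Σ_{k=1}^N f_k(x_k^t − (1/L)∇f_k(x_k^t)). Then for every k ∈ {1,…,N}, ∇f_k(x_k^t) → 0 as t → ∞. -/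
/-!
An `L`-Lipschitz gradient gives the descent lemma `f y ≤ f x + ⟪∇f x, y - x⟫ + L/2 ‖y - x‖²`,
so a gradient step of length `1/L` decreases `f` by at least `‖∇f x‖² / (2L)`; since every
`L_k ≤ L`, this holds for each `f_k`. By domination the sum `∑ₖ fₖ(xₖᵗ)` therefore decreases by
at least `∑ₖ ‖∇fₖ(xₖᵗ)‖² / (2L)` per step. Being bounded below, it converges, so these decrements
tend to zero, and with them every gradient.
-/

open scoped Gradient RealInnerProductSpace

section Descent

variable {E : Type*} [NormedAddCommGroup E] [InnerProductSpace ℝ E] [CompleteSpace E]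
  {f : E → ℝ} {L : ℝ}

theorem hasDerivAt_comp_add_smul (hf : Differentiable ℝ f) (x v : E) (s : ℝ) :
    HasDerivAt (fun s : ℝ => f (x + s • v)) ⟪∇ f (x + s • v), v⟫ s := by
  have hline : HasDerivAt (fun s : ℝ => x + s • v) v s := by
    simpa using ((hasDerivAt_id s).smul_const v).const_add x
  have := (hf (x + s • v)).hasGradientAt.hasFDerivAt.comp_hasDerivAt s hline
  rwa [InnerProductSpace.toDual_apply_apply] at this

theorem le_add_inner_add_half_mul_sq_of_lipschitz_gradient (hf : Differentiable ℝ f)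
    (hLip : ∀ x y, ‖∇ f x - ∇ f y‖ ≤ L * ‖x - y‖) (x y : E) :
    f y ≤ f x + ⟪∇ f x, y - x⟫ + L / 2 * ‖y - x‖ ^ 2 := by
  set v := y - x
  -- fence `s ↦ f (x + s • v)` on `[0, 1]` by the quadratic model whose value at `s = 1` is the bound
  have hB : ∀ s : ℝ, HasDerivAt (fun s => f x + s * ⟪∇ f x, v⟫ + L / 2 * ‖v‖ ^ 2 * s ^ 2)
      (⟪∇ f x, v⟫ + L * ‖v‖ ^ 2 * s) s := fun s =>
    ((((hasDerivAt_id s).mul_const ⟪∇ f x, v⟫).const_add (f x)).add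
      ((hasDerivAt_pow 2 s).const_mul (L / 2 * ‖v‖ ^ 2))).congr_deriv (by simp; ring)
  have hslope : ∀ s ∈ Set.Ico (0 : ℝ) 1, ⟪∇ f (x + s • v), v⟫ ≤ ⟪∇ f x, v⟫ + L * ‖v‖ ^ 2 * s := by
    rintro s ⟨hs, -⟩
    have hgrad : ‖∇ f (x + s • v) - ∇ f x‖ ≤ L * (s * ‖v‖) := by
      simpa [norm_smul, abs_of_nonneg hs] using hLip (x + s • v) x
    calc ⟪∇ f (x + s • v), v⟫ = ⟪∇ f x, v⟫ + ⟪∇ f (x + s • v) - ∇ f x, v⟫ := by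
          rw [inner_sub_left]; ring
      _ ≤ ⟪∇ f x, v⟫ + ‖∇ f (x + s • v) - ∇ f x‖ * ‖v‖ := by gcongr; exact real_inner_le_norm _ _
      _ ≤ ⟪∇ f x, v⟫ + L * (s * ‖v‖) * ‖v‖ := by gcongr
      _ = ⟪∇ f x, v⟫ + L * ‖v‖ ^ 2 * s := by ring
  have := image_le_of_deriv_right_le_deriv_boundary
    (fun s _ => (hasDerivAt_comp_add_smul hf x v s).continuousAt.continuousWithinAt)
    (fun s _ => (hasDerivAt_comp_add_smul hf x v s).hasDerivWithinAt)
    (by simp) (fun s _ => (hB s).continuousAt.continuousWithinAt)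
    (fun s _ => (hB s).hasDerivWithinAt) hslope (Set.right_mem_Icc.2 zero_le_one)
  simpa [v] using this

theorem apply_sub_one_div_smul_gradient_le (hf : Differentiable ℝ f) (hL : 0 < L)
    (hLip : ∀ x y, ‖∇ f x - ∇ f y‖ ≤ L * ‖x - y‖) (x : E) :
    f (x - (1 / L) • ∇ f x) ≤ f x - 1 / (2 * L) * ‖∇ f x‖ ^ 2 := by
  have hstep : x - (1 / L) • ∇ f x - x = -((1 / L) • ∇ f x) := by abel
  calc f (x - (1 / L) • ∇ f x)
      ≤ f x + ⟪∇ f x, x - (1 / L) • ∇ f x - x⟫ + L / 2 * ‖x - (1 / L) • ∇ f x - x‖ ^ 2 :=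
        le_add_inner_add_half_mul_sq_of_lipschitz_gradient hf hLip _ _
    _ = f x - 1 / (2 * L) * ‖∇ f x‖ ^ 2 := by
        rw [hstep, inner_neg_right, real_inner_smul_right, real_inner_self_eq_norm_sq, norm_neg,
          norm_smul, Real.norm_of_nonneg (by positivity)]
        field_simp
        ring

end Descent

open Filter Topology

theorem tendsto_zero_of_le_sub_mul_of_bddBelow {S D : ℕ → ℝ} {c : ℝ} (hc : 0 < c)
    (hS : BddBelow (Set.range S)) (hD : ∀ t, 0 ≤ D t) (hstep : ∀ t, S (t + 1) ≤ S t - c * D t) :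
    Tendsto D atTop (𝓝 0) := by
  have hanti : Antitone S := antitone_nat_of_succ_le fun t => by nlinarith [hD t, hstep t]
  have hlim := tendsto_atTop_ciInf hanti hS
  have hgap : Tendsto (fun t => (S t - S (t + 1)) / c) atTop (𝓝 0) := by
    simpa using (hlim.sub (hlim.comp (tendsto_add_atTop_nat 1))).div_const c
  refine squeeze_zero hD (fun t => ?_) hgap
  rw [le_div_iff₀ hc]
  linarith [hstep t]

/-- If each `f_k` is differentiable, bounded below, with `L_k`-Lipschitz
gradient, `L = max{L_k}`, and the iterates dominate (in averaged objective value) the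
gradient-descent step with step size `1/L`, then `∇f_k(x_k^t) → 0` for every `k`. -/
theorem stmt_17 {n N : ℕ}
    (f : Fin N → EuclideanSpace ℝ (Fin n) → ℝ)
    (hdiff : ∀ k, Differentiable ℝ (f k))
    (hbdd : ∀ k, BddBelow (Set.range (f k)))
    (L : Fin N → ℝ) (hL : ∀ k, 0 < L k)
    (hLip : ∀ k x y, ‖gradient (f k) x - gradient (f k) y‖ ≤ L k * ‖x - y‖)
    (Lmax : ℝ) (hLmax : IsGreatest (Set.range L) Lmax)
    (x : ℕ → Fin N → EuclideanSpace ℝ (Fin n))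
    (hdom : ∀ t, (1 / (N : ℝ)) * ∑ k, f k (x (t + 1) k) ≤
        (1 / (N : ℝ)) * ∑ k, f k (x t k - (1 / Lmax) • gradient (f k) (x t k))) :
    ∀ k, Filter.Tendsto (fun t => gradient (f k) (x t k)) Filter.atTop (nhds 0) := by
  intro k
  have hle : ∀ j, L j ≤ Lmax := fun j => hLmax.2 ⟨j, rfl⟩
  have hpos : 0 < Lmax := (hL k).trans_le (hle k)
  have hLipMax : ∀ j x y, ‖∇ (f j) x - ∇ (f j) y‖ ≤ Lmax * ‖x - y‖ := fun j x y =>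
    (hLip j x y).trans (by gcongr; exact hle j)
  have hN : (0 : ℝ) < N := Nat.cast_pos.2 k.pos
  have hdecrease : ∀ t, ∑ j, f j (x (t + 1) j) ≤
      ∑ j, f j (x t j) - 1 / (2 * Lmax) * ∑ j, ‖∇ (f j) (x t j)‖ ^ 2 := fun t =>
    calc ∑ j, f j (x (t + 1) j)
        ≤ ∑ j, f j (x t j - (1 / Lmax) • ∇ (f j) (x t j)) :=
          le_of_mul_le_mul_left (hdom t) (by positivity)
      _ ≤ ∑ j, (f j (x t j) - 1 / (2 * Lmax) * ‖∇ (f j) (x t j)‖ ^ 2) :=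
          Finset.sum_le_sum fun j _ =>
            apply_sub_one_div_smul_gradient_le (hdiff j) hpos (hLipMax j) _
      _ = _ := by rw [Finset.sum_sub_distrib, Finset.mul_sum]
  have hbddSum : BddBelow (Set.range fun t => ∑ j, f j (x t j)) := by
    choose b hb using hbdd
    exact ⟨∑ j, b j, by rintro _ ⟨t, rfl⟩; exact Finset.sum_le_sum fun j _ => hb j ⟨_, rfl⟩⟩
  have hgrad := tendsto_zero_of_le_sub_mul_of_bddBelow (by positivity) hbddSum
    (fun t => Finset.sum_nonneg fun j _ => sq_nonneg ‖∇ (f j) (x t j)‖) hdecrease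
  refine tendsto_zero_iff_norm_tendsto_zero.2
    (squeeze_zero (fun _ => norm_nonneg _) (fun t => ?_) (by simpa using hgrad.sqrt))
  exact (Real.le_sqrt (norm_nonneg _) (Finset.sum_nonneg fun j _ => sq_nonneg _)).2
    (Finset.single_le_sum (fun j _ => sq_nonneg ‖∇ (f j) (x t j)‖) (Finset.mem_univ k))
end
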